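/- For r ∈ [rᵢ, r_{i+1}] and λ(r) = sqrt(r² − Σ_{m=1}^{i} a_{τ_m}²)/‖c_{τ_{i+1},…,τ_R}‖, we have r ∈ [rᵢ, r_{i+1}] if and only if λ(r) ∈ [φ_{τᵢ}⁻¹, φ_{τ_{i+1}}⁻¹]; moreover for any such r and any j ∈ {τ_{i+1},…,τ_R}, λ(r)·cⱼ ≤ aⱼ, so the scaled vector λ(r)·c restricted to the unsaturated indices satisfies the box constraints. -/

import Mathlib

/-!
The map `p ↦ √(p² S + T)` (with `S = ‖c_{τ_{i+1},…,τ_R}‖²`, `T = Σ_{m ≤ i} a_{τ_m}²`) and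
`λ(r) = √(r² − T) / √S` are mutually inverse increasing maps between `p ≥ 0` and `r ≥ √T`, so
`√(p² S + T) ≤ r ↔ p ≤ λ(r)` and `r ≤ √(p² S + T) ↔ λ(r) ≤ p`. Moving the index `τ_{i+1}` from
the unsaturated block to the saturated one changes `S` by `−c²` and `T` by `+a²`, which `φ⁻²`
exactly compensates since `φ⁻¹ c = a`; hence `r_i` and `r_{i+1}` are the images of `φ_{τ_i}⁻¹`
and `φ_{τ_{i+1}}⁻¹` under the same map. The box constraints follow from
`λ(r) ≤ φ_{τ_{i+1}}⁻¹ ≤ φ_j⁻¹`.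
-/

open Finset

lemma Real.sqrt_sq_mul {p : ℝ} (hp : 0 ≤ p) (S : ℝ) : √(p ^ 2 * S) = p * √S := by
  rw [Real.sqrt_mul (sq_nonneg p), Real.sqrt_sq hp]

lemma sqrt_sq_mul_add_le_iff {S T p r : ℝ} (hS : 0 < S) (hp : 0 < p) (hr : 0 ≤ r) :
    √(p ^ 2 * S + T) ≤ r ↔ p ≤ √(r ^ 2 - T) / √S := by
  rw [Real.sqrt_le_left hr, le_div_iff₀ (Real.sqrt_pos.mpr hS),
    ← Real.sqrt_sq_mul hp.le, Real.sqrt_le_sqrt_iff' (by positivity)]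
  constructor <;> intro h <;> linarith

lemma le_sqrt_sq_mul_add_iff {S T p r : ℝ} (hS : 0 < S) (hT : 0 ≤ T) (hp : 0 ≤ p) (hr : 0 ≤ r) :
    r ≤ √(p ^ 2 * S + T) ↔ √(r ^ 2 - T) / √S ≤ p := by
  rw [Real.le_sqrt hr (by positivity), div_le_iff₀ (Real.sqrt_pos.mpr hS),
    ← Real.sqrt_sq_mul hp, Real.sqrt_le_sqrt_iff (by positivity)]
  constructor <;> intro h <;> linarith

lemma Fin.sum_filter_val_lt_succ {M : Type*} [AddCommMonoid M] {n : ℕ} (f : Fin n → M)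
    (i : ℕ) (hi : i < n) :
    ∑ m ∈ univ.filter (fun m : Fin n => (m : ℕ) < i + 1), f m =
      ∑ m ∈ univ.filter (fun m : Fin n => (m : ℕ) < i), f m + f ⟨i, hi⟩ := by
  have hsplit : univ.filter (fun m : Fin n => (m : ℕ) < i + 1) =
      insert ⟨i, hi⟩ (univ.filter (fun m : Fin n => (m : ℕ) < i)) := by
    ext m
    simp only [mem_filter, mem_univ, true_and, mem_insert, Fin.ext_iff]
    omega
  rw [hsplit, sum_insert (by simp), add_comm]

lemma Fin.sum_filter_le_val_eq_add {M : Type*} [AddCommMonoid M] {n : ℕ} (f : Fin n → M)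
    (i : ℕ) (hi : i < n) :
    ∑ m ∈ univ.filter (fun m : Fin n => i ≤ (m : ℕ)), f m =
      f ⟨i, hi⟩ + ∑ m ∈ univ.filter (fun m : Fin n => i + 1 ≤ (m : ℕ)), f m := by
  have hsplit : univ.filter (fun m : Fin n => i ≤ (m : ℕ)) =
      insert ⟨i, hi⟩ (univ.filter (fun m : Fin n => i + 1 ≤ (m : ℕ))) := by
    ext m
    simp only [mem_filter, mem_univ, true_and, mem_insert, Fin.ext_iff]
    omega
  rw [hsplit, sum_insert (by simp)]

lemma inv_div_sq_mul_add_sq {a c : ℝ} (hc : c ≠ 0) (S T : ℝ) :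
    (c / a)⁻¹ ^ 2 * S + (T + a ^ 2) = (c / a)⁻¹ ^ 2 * (c ^ 2 + S) + T := by
  rw [inv_div]
  field_simp
  ring

lemma mul_le_of_le_inv_div {a c x : ℝ} (hc : 0 < c) (hx : x ≤ (c / a)⁻¹) : x * c ≤ a := by
  rwa [inv_div, le_div_iff₀ hc] at hx

/-- With `λ(r) = sqrt(r² − Σ_{m=1}^{i} a_{τ_m}²)/‖c_{τ_{i+1},…,τ_R}‖`,
one has `r ∈ [rᵢ, r_{i+1}]` if and only if `λ(r) ∈ [φ_{τᵢ}⁻¹, φ_{τ_{i+1}}⁻¹]`;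
moreover for any such `r` and any unsaturated index `j ∈ {τ_{i+1},…,τ_R}`,
`λ(r)·cⱼ ≤ aⱼ`, so `λ(r)·c` restricted to the unsaturated indices satisfies
the box constraints (0-based indexing: `τ m` is the paper's `τ_{m+1}`). -/
theorem stmt_5 (R : ℕ) (hR : 1 ≤ R) (a c : Fin R → ℝ)
    (ha : ∀ j, 0 < a j) (hc : ∀ j, 0 < c j) (τ : Equiv.Perm (Fin R))
    (hord : ∀ i j : Fin R, i ≤ j → c (τ j) / a (τ j) ≤ c (τ i) / a (τ i))
    (rseq : ℕ → ℝ)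
    (hri : ∀ i, 1 ≤ i → (hiR : i ≤ R) → rseq i =
      Real.sqrt ((c (τ ⟨i - 1, by omega⟩) / a (τ ⟨i - 1, by omega⟩))⁻¹ ^ 2 *
          (∑ m ∈ Finset.univ.filter (fun m : Fin R => i ≤ (m : ℕ)), (c (τ m)) ^ 2) +
        ∑ m ∈ Finset.univ.filter (fun m : Fin R => (m : ℕ) < i), (a (τ m)) ^ 2))
    (i : ℕ) (hi1 : 1 ≤ i) (hi : i ≤ R - 1)
    (lam : ℝ → ℝ)
    (hlam : ∀ r : ℝ, lam r =
      Real.sqrt (r ^ 2 - ∑ m ∈ Finset.univ.filter (fun m : Fin R => (m : ℕ) < i), (a (τ m)) ^ 2) /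
        Real.sqrt (∑ m ∈ Finset.univ.filter (fun m : Fin R => i ≤ (m : ℕ)), (c (τ m)) ^ 2)) :
    (∀ r : ℝ, 0 ≤ r →
      ((r ∈ Set.Icc (rseq i) (rseq (i + 1))) ↔
        lam r ∈ Set.Icc ((c (τ ⟨i - 1, by omega⟩) / a (τ ⟨i - 1, by omega⟩))⁻¹)
          ((c (τ ⟨i, by omega⟩) / a (τ ⟨i, by omega⟩))⁻¹))) ∧
    (∀ r ∈ Set.Icc (rseq i) (rseq (i + 1)), ∀ m : Fin R, i ≤ (m : ℕ) →
      lam r * c (τ m) ≤ a (τ m)) := by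
  have hiR : i < R := by omega
  set S := ∑ m ∈ univ.filter (fun m : Fin R => i ≤ (m : ℕ)), c (τ m) ^ 2 with hS_def
  set T := ∑ m ∈ univ.filter (fun m : Fin R => (m : ℕ) < i), a (τ m) ^ 2
  have hS : 0 < S := sum_pos' (fun _ _ => sq_nonneg _) ⟨⟨i, hiR⟩, by simp, pow_pos (hc _) 2⟩
  have hT : 0 ≤ T := sum_nonneg fun _ _ => sq_nonneg _
  have hr_i : rseq i = √((c (τ ⟨i - 1, by omega⟩) / a (τ ⟨i - 1, by omega⟩))⁻¹ ^ 2 * S + T) :=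
    hri i hi1 hiR.le
  have hr_succ : rseq (i + 1) = √((c (τ ⟨i, hiR⟩) / a (τ ⟨i, hiR⟩))⁻¹ ^ 2 * S + T) := by
    rw [hri (i + 1) (by omega) hiR]
    simp only [Nat.add_sub_cancel]
    rw [Fin.sum_filter_val_lt_succ (fun m => a (τ m) ^ 2) i hiR,
      inv_div_sq_mul_add_sq (hc _).ne', hS_def, Fin.sum_filter_le_val_eq_add (fun m => c (τ m) ^ 2) i hiR]
  have hiff : ∀ r : ℝ, 0 ≤ r → (r ∈ Set.Icc (rseq i) (rseq (i + 1)) ↔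
      lam r ∈ Set.Icc (c (τ ⟨i - 1, by omega⟩) / a (τ ⟨i - 1, by omega⟩))⁻¹
        (c (τ ⟨i, hiR⟩) / a (τ ⟨i, hiR⟩))⁻¹) := by
    intro r hr
    rw [Set.mem_Icc, Set.mem_Icc, hr_i, hr_succ, hlam r]
    have hφ : ∀ j, 0 < (c j / a j)⁻¹ := fun j => inv_pos.mpr (div_pos (hc j) (ha j))
    exact and_congr (sqrt_sq_mul_add_le_iff hS (hφ _) hr)
      (le_sqrt_sq_mul_add_iff hS hT (hφ _).le hr)
  refine ⟨hiff, fun r hr m hm => mul_le_of_le_inv_div (hc _) ?_⟩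
  have hr0 : 0 ≤ r := (hr_i ▸ Real.sqrt_nonneg _).trans hr.1
  calc lam r ≤ (c (τ ⟨i, hiR⟩) / a (τ ⟨i, hiR⟩))⁻¹ := ((hiff r hr0).mp hr).2
    _ ≤ (c (τ m) / a (τ m))⁻¹ := inv_anti₀ (div_pos (hc _) (ha _)) (hord ⟨i, hiR⟩ m hm)
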